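/- Let m ≥ 0 and let X be a compact metric space with the property that every finite open cover of X admits a finite open refinement which can be partitioned into m+1 subfamilies, each consisting of pairwise disjoint open sets (this property holds exactly when the covering dimension of X is at most m). Let A be a unital C*-algebra, let l ≥ 1, and let a, b ∈ C(X, M_l(A))_+. If a(x) is Cuntz subequivalent to b(x) in M_l(A) for every x ∈ X, then a is Cuntz subequivalent to diag(b, b, …, b) (m+1 diagonal copies of b) in C(X, M_{(m+1)l}(A)). -/
import Mathlib


open Filter Topology

/-- A positive element of a C*-algebra: one of the form `y* y`. -/
def IsPositiveElem {D : Type*} [Mul D] [Star D] (a : D) : Prop :=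
  ∃ y : D, a = star y * y

/-- Cuntz subequivalence in `D`: `a ≾_D b` iff there is a sequence `(cₙ)` in `D` with
`cₙ * b * cₙ* → a`. -/
def CuntzSub {D : Type*} [Mul D] [Star D] [TopologicalSpace D] (a b : D) : Prop :=
  ∃ c : ℕ → D, Tendsto (fun n => c n * b * star (c n)) atTop (nhds a)

/-- `X` has covering dimension at most `m`: every finite open cover of `X` admits a finite open
refinement which can be partitioned into `m + 1` subfamilies, each consisting of pairwise
disjoint open sets.  (The colouring `col` records the subfamily of each refining set and `ref`
records the covering set it refines.) -/
def CoveringDimLE (X : Type*) [TopologicalSpace X] (m : ℕ) : Prop :=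
  ∀ (n : ℕ) (U : Fin n → Set X), (∀ i, IsOpen (U i)) → (⋃ i, U i) = Set.univ →
    ∃ (N : ℕ) (V : Fin N → Set X) (col : Fin N → Fin (m + 1)) (ref : Fin N → Fin n),
      (∀ k, IsOpen (V k)) ∧ (⋃ k, V k) = Set.univ ∧ (∀ k, V k ⊆ U (ref k)) ∧
      (∀ k k', k ≠ k' → col k = col k' → V k ∩ V k' = ∅)

variable {X : Type*} [TopologicalSpace X] {A : Type*} [CStarAlgebra A] {l m : ℕ}

/-- The canonical embedding of `C(X, Mₗ(A))` into `C(X, M_{(m+1)l}(A))` as the upper-left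
corner.  Here `M_{(m+1)l}(A)` is modelled with index set `Fin (m+1) × Fin l`. -/
def cornerCM (m : ℕ) (a : C(X, Matrix (Fin l) (Fin l) A)) :
    C(X, Matrix (Fin (m + 1) × Fin l) (Fin (m + 1) × Fin l) A) where
  toFun x := Matrix.of fun p q => if p.1 = 0 ∧ q.1 = 0 then a x p.2 q.2 else 0
  continuous_toFun := continuous_matrix fun p q => by
    by_cases h : p.1 = 0 ∧ q.1 = 0
    · simpa [Matrix.of_apply, h] using ((map_continuous a).matrix_elem p.2 q.2)
    · simpa [Matrix.of_apply, h] using continuous_const (y := (0 : A))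

/-- The block-diagonal element `diag(b, b, …, b)` of `C(X, M_{(m+1)l}(A))` with `m + 1`
diagonal copies of `b ∈ C(X, Mₗ(A))`. -/
def diagCM (m : ℕ) (b : C(X, Matrix (Fin l) (Fin l) A)) :
    C(X, Matrix (Fin (m + 1) × Fin l) (Fin (m + 1) × Fin l) A) where
  toFun x := Matrix.of fun p q => if p.1 = q.1 then b x p.2 q.2 else 0
  continuous_toFun := continuous_matrix fun p q => by
    by_cases h : p.1 = q.1
    · simpa [Matrix.of_apply, h] using ((map_continuous b).matrix_elem p.2 q.2)
    · simpa [Matrix.of_apply, h] using continuous_const (y := (0 : A))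


section Aux

theorem tendstoUniformly_pi' {ι X' : Type*} {κ : Type*} [Finite κ] {δ : κ → Type*}
    [∀ k, UniformSpace (δ k)] {F : ι → X' → ∀ k, δ k} {f : X' → ∀ k, δ k} {l : Filter ι}
    (h : ∀ k, TendstoUniformly (fun n x => F n x k) (fun x => f x k) l) :
    TendstoUniformly F f l := by
  intro u hu
  rw [Pi.uniformity] at hu
  obtain ⟨t, ht, rfl⟩ := Filter.exists_iInter_of_mem_iInf hu
  choose w hw hwt using fun k => Filter.mem_comap.1 (ht k)
  have key : ∀ᶠ n in l, ∀ k, ∀ x, (f x k, F n x k) ∈ w k :=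
    eventually_all.2 fun k => h k (w k) (hw k)
  filter_upwards [key] with n hn x
  exact Set.mem_iInter.2 fun k => hwt k (hn k x)

variable {A : Type*} [CStarAlgebra A] {l m N : ℕ}

/-- The corner embedding at the level of matrices. -/
def cornerMat (m : ℕ) (M : Matrix (Fin l) (Fin l) A) :
    Matrix (Fin (m + 1) × Fin l) (Fin (m + 1) × Fin l) A :=
  Matrix.of fun p q => if p.1 = 0 ∧ q.1 = 0 then M p.2 q.2 else 0

/-- The block diagonal at the level of matrices. -/
def diagMat (m : ℕ) (B : Matrix (Fin l) (Fin l) A) :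
    Matrix (Fin (m + 1) × Fin l) (Fin (m + 1) × Fin l) A :=
  Matrix.of fun p q => if p.1 = q.1 then B p.2 q.2 else 0

/-- The matrix with block `T` in position `(0, j)` and zeros elsewhere. -/
def eMat (m : ℕ) (j : Fin (m + 1)) (T : Matrix (Fin l) (Fin l) A) :
    Matrix (Fin (m + 1) × Fin l) (Fin (m + 1) × Fin l) A :=
  Matrix.of fun p q => if p.1 = 0 ∧ q.1 = j then T p.2 q.2 else 0

/-- The matrix with block `T` in position `(j, 0)` and zeros elsewhere. -/
def fMat (m : ℕ) (j : Fin (m + 1)) (T : Matrix (Fin l) (Fin l) A) :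
    Matrix (Fin (m + 1) × Fin l) (Fin (m + 1) × Fin l) A :=
  Matrix.of fun p q => if p.1 = j ∧ q.1 = 0 then T p.2 q.2 else 0

theorem star_ite' (c : Prop) [Decidable c] (x y : A) :
    star (if c then x else y) = if c then star x else star y := by
  split_ifs <;> rfl

theorem eMat_mul_diag (j : Fin (m+1)) (T B : Matrix (Fin l) (Fin l) A) :
    eMat m j T * diagMat m B = eMat m j (T * B) := by
  ext p q
  simp only [Matrix.mul_apply, eMat, diagMat, Matrix.of_apply, Fintype.sum_prod_type,
    ite_mul, mul_ite, zero_mul, mul_zero]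
  by_cases hp : p.1 = 0
  · by_cases hq : q.1 = j <;>
      simp [hp, hq, Matrix.mul_apply, Finset.sum_comm (γ := Fin l) (β := Fin (m+1))]
  · simp [hp]

theorem star_eMat (j : Fin (m+1)) (T : Matrix (Fin l) (Fin l) A) :
    star (eMat m j T) = fMat m j (star T) := by
  ext p q
  simp only [Matrix.star_apply, eMat, fMat, Matrix.of_apply]
  split_ifs with h1 h2 h2
  · rfl
  · exact absurd ⟨h1.2, h1.1⟩ h2
  · exact absurd ⟨h2.2, h2.1⟩ h1
  · exact star_zero A

theorem eMat_mul_fMat (j j' : Fin (m+1)) (M M' : Matrix (Fin l) (Fin l) A) :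
    eMat m j M * fMat m j' M' = if j = j' then cornerMat m (M * M') else 0 := by
  ext p q
  simp only [Matrix.mul_apply, eMat, fMat, cornerMat, Matrix.of_apply, Fintype.sum_prod_type,
    ite_mul, mul_ite, zero_mul, mul_zero]
  by_cases hp : p.1 = 0 <;> by_cases hq : q.1 = 0 <;> by_cases hj : j = j' <;>
    (simp [hp, hq, hj, Matrix.mul_apply, Matrix.zero_apply] <;>
      exact fun h => absurd h.symm hj)

theorem eMat_conj (j j' : Fin (m+1)) (T T' B : Matrix (Fin l) (Fin l) A) :
    eMat m j T * diagMat m B * star (eMat m j' T') =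
      if j = j' then cornerMat m (T * B * star T') else 0 := by
  rw [eMat_mul_diag, star_eMat, eMat_mul_fMat]

theorem conj_sum (w : Fin N → ℝ) (col : Fin N → Fin (m+1)) (T : Fin N → Matrix (Fin l) (Fin l) A)
    (B : Matrix (Fin l) (Fin l) A)
    (horth : ∀ k k', k ≠ k' → col k = col k' → w k * w k' = 0) :
    (∑ k, w k • eMat m (col k) (T k)) * diagMat m B * star (∑ k, w k • eMat m (col k) (T k))
      = ∑ k, (w k * w k) • cornerMat m (T k * B * star (T k)) := by
  have expand : (∑ k, w k • eMat m (col k) (T k)) * diagMat m B *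
      star (∑ k, w k • eMat m (col k) (T k)) =
      ∑ k, ∑ k', (w k * w k') •
        (eMat m (col k) (T k) * diagMat m B * star (eMat m (col k') (T k'))) := by
    rw [star_sum, Finset.sum_mul, Finset.sum_mul]
    refine Finset.sum_congr rfl fun k _ => ?_
    rw [Finset.mul_sum]
    refine Finset.sum_congr rfl fun k' _ => ?_
    rw [star_smul, star_trivial, smul_mul_assoc, smul_mul_assoc, mul_smul_comm, smul_smul]
  rw [expand]
  refine Finset.sum_congr rfl fun k _ => ?_
  rw [Finset.sum_eq_single k]
  · rw [eMat_conj, if_pos rfl]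
  · intro k' _ hk'
    by_cases hcol : col k = col k'
    · rw [horth k k' (Ne.symm hk') hcol, zero_smul]
    · rw [eMat_conj, if_neg hcol, smul_zero]
  · intro h; exact absurd (Finset.mem_univ k) h

theorem corner_entry_bound {ε : ℝ} (φ : Fin N → ℝ) (hφ0 : ∀ k, 0 ≤ φ k) (hφ1 : ∑ k, φ k = 1)
    (M : Fin N → Matrix (Fin l) (Fin l) A) (a0 : Matrix (Fin l) (Fin l) A)
    (hM : ∀ k, φ k ≠ 0 → ∀ i j, ‖M k i j - a0 i j‖ ≤ ε) (p q : Fin (m+1) × Fin l) :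
    ‖(∑ k, φ k • cornerMat m (M k)) p q - cornerMat m a0 p q‖ ≤ ε := by
  have hε0 : 0 ≤ ε := by
    obtain ⟨k, hk⟩ : ∃ k, φ k ≠ 0 := by
      by_contra h
      push_neg at h
      rw [Finset.sum_eq_zero (fun k _ => h k)] at hφ1
      exact one_ne_zero hφ1.symm
    exact le_trans (norm_nonneg _) (hM k hk p.2 q.2)
  simp only [Matrix.sum_apply, Matrix.smul_apply]
  by_cases hpq : p.1 = 0 ∧ q.1 = 0
  · have h1 : cornerMat m a0 p q = a0 p.2 q.2 := by simp [cornerMat, hpq]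
    have h2 : ∀ k, cornerMat m (M k) p q = M k p.2 q.2 := fun k => by simp [cornerMat, hpq]
    simp only [h1, h2]
    have ha : a0 p.2 q.2 = ∑ k, φ k • a0 p.2 q.2 := by
      rw [← Finset.sum_smul, hφ1, one_smul]
    rw [ha, ← Finset.sum_sub_distrib]
    refine le_trans (norm_sum_le _ _) ?_
    have : ∀ k ∈ Finset.univ, ‖φ k • M k p.2 q.2 - φ k • a0 p.2 q.2‖ ≤ φ k * ε := by
      intro k _
      rw [← smul_sub, norm_smul, Real.norm_of_nonneg (hφ0 k)]
      by_cases hk : φ k = 0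
      · simp [hk]
      · exact mul_le_mul_of_nonneg_left (hM k hk p.2 q.2) (hφ0 k)
    refine le_trans (Finset.sum_le_sum this) ?_
    rw [← Finset.sum_mul, hφ1, one_mul]
  · have h1 : cornerMat m a0 p q = 0 := by simp [cornerMat, hpq]
    have h2 : ∀ k, cornerMat m (M k) p q = 0 := fun k => by simp [cornerMat, hpq]
    simp [h1, h2, hε0]

theorem exists_partition {X : Type*} [MetricSpace X] {N : ℕ} (V : Fin N → Set X)
    (hV : ∀ k, IsOpen (V k)) (hcov : (⋃ k, V k) = Set.univ) :
    ∃ φ : Fin N → X → ℝ, (∀ k, Continuous (φ k)) ∧ (∀ k x, 0 ≤ φ k x) ∧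
      (∀ x, ∑ k, φ k x = 1) ∧ (∀ k x, φ k x ≠ 0 → x ∈ V k) := by
  classical
  set g : Fin N → X → ℝ :=
    fun k x => if ((V k)ᶜ).Nonempty then Metric.infDist x (V k)ᶜ else 1 with hg
  have hgcont : ∀ k, Continuous (g k) := by
    intro k
    by_cases h : ((V k)ᶜ).Nonempty
    · simpa [hg, h] using Metric.continuous_infDist_pt ((V k)ᶜ)
    · simpa [hg, h] using continuous_const (y := (1:ℝ))
  have hg0 : ∀ k x, 0 ≤ g k x := by
    intro k x
    by_cases h : ((V k)ᶜ).Nonempty <;> simp [hg, h, Metric.infDist_nonneg]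
  have hgne : ∀ k x, g k x ≠ 0 → x ∈ V k := by
    intro k x hne
    by_cases h : ((V k)ᶜ).Nonempty
    · by_contra hx
      have hx' : x ∈ (V k)ᶜ := hx
      exact hne (by simp [hg, h, Metric.infDist_zero_of_mem hx'])
    · have : (V k)ᶜ = ∅ := Set.not_nonempty_iff_eq_empty.1 h
      have : V k = Set.univ := by rwa [Set.compl_empty_iff] at this
      simp [this]
  have hgpos : ∀ k x, x ∈ V k → 0 < g k x := by
    intro k x hx
    by_cases h : ((V k)ᶜ).Nonempty
    · have := ((hV k).isClosed_compl.notMem_iff_infDist_pos h).1 (by simpa using hx)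
      simpa [hg, h] using this
    · simp [hg, h]
  have hS : ∀ x, 0 < ∑ k, g k x := by
    intro x
    have hx : x ∈ ⋃ k, V k := hcov ▸ Set.mem_univ x
    obtain ⟨k₀, hk₀⟩ := Set.mem_iUnion.1 hx
    exact Finset.sum_pos' (fun k _ => hg0 k x) ⟨k₀, Finset.mem_univ _, hgpos k₀ x hk₀⟩
  refine ⟨fun k x => g k x / ∑ k', g k' x, fun k => ?_, fun k x => ?_, fun x => ?_,
    fun k x h => ?_⟩
  · exact (hgcont k).div (continuous_finset_sum _ fun k' _ => hgcont k') fun x => (hS x).ne'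
  · exact div_nonneg (hg0 k x) (hS x).le
  · rw [← Finset.sum_div, div_self (hS x).ne']
  · refine hgne k x fun h0 => h ?_
    simp only [h0, zero_div]

theorem local_data {X : Type*} [TopologicalSpace X]
    (a b : C(X, Matrix (Fin l) (Fin l) A)) (hpt : ∀ x : X, CuntzSub (a x) (b x))
    {ε : ℝ} (hε : 0 < ε) (x : X) :
    ∃ (C : Matrix (Fin l) (Fin l) A) (U : Set X), IsOpen U ∧ x ∈ U ∧
      ∀ y ∈ U, ∀ i j, ‖(C * b y * star C) i j - a y i j‖ < ε := by
  obtain ⟨c, hc⟩ := hpt x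
  have h1 : ∀ i j, Tendsto (fun n => (c n * b x * star (c n)) i j) atTop (nhds (a x i j)) :=
    fun i j => ((Continuous.matrix_elem continuous_id i j).tendsto (a x)).comp hc
  have h2 : ∀ᶠ n in atTop, ∀ i, ∀ j,
      dist ((c n * b x * star (c n)) i j) (a x i j) < ε / 2 := by
    rw [eventually_all]
    intro i
    rw [eventually_all]
    intro j
    exact Metric.tendsto_nhds.mp (h1 i j) (ε / 2) (half_pos hε)
  obtain ⟨n, hn⟩ := h2.exists
  set C := c n with hC
  refine ⟨C, ⋂ i, ⋂ j, {y | ‖(C * b y * star C) i j - a y i j‖ < ε}, ?_, ?_, ?_⟩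
  · refine isOpen_iInter_of_finite fun i => isOpen_iInter_of_finite fun j => ?_
    have hcont : Continuous fun y => ‖(C * b y * star C) i j - a y i j‖ :=
      ((((continuous_const.mul (map_continuous b)).mul continuous_const).matrix_elem i j).sub
        ((map_continuous a).matrix_elem i j)).norm
    exact isOpen_lt hcont continuous_const
  · refine Set.mem_iInter.2 fun i => Set.mem_iInter.2 fun j => ?_
    have := hn i j
    rw [dist_eq_norm] at this
    exact lt_of_lt_of_le this (by linarith)
  · intro y hy i j
    exact Set.mem_iInter.1 (Set.mem_iInter.1 hy i) j

theorem key_approx {X : Type*} [MetricSpace X] [CompactSpace X] (hdim : CoveringDimLE X m)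
    (a b : C(X, Matrix (Fin l) (Fin l) A))
    (hpt : ∀ x : X, CuntzSub (a x) (b x)) {ε : ℝ} (hε : 0 < ε) :
    ∃ cc : C(X, Matrix (Fin (m + 1) × Fin l) (Fin (m + 1) × Fin l) A),
      ∀ (x : X) (p q : Fin (m + 1) × Fin l),
        ‖(cc x * diagMat m (b x) * star (cc x)) p q - cornerMat m (a x) p q‖ ≤ ε := by
  classical
  choose Cx Ux hUopen hUmem hUprop using local_data a b hpt hε
  have hcov : (Set.univ : Set X) ⊆ ⋃ x : X, Ux x := fun y _ => Set.mem_iUnion.2 ⟨y, hUmem y⟩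
  obtain ⟨t, ht⟩ := isCompact_univ.elim_finite_subcover Ux hUopen hcov
  set e := t.equivFin with he
  set U' : Fin t.card → Set X := fun i => Ux ((e.symm i) : X) with hU'
  set C' : Fin t.card → Matrix (Fin l) (Fin l) A := fun i => Cx ((e.symm i) : X) with hC'
  have hU'open : ∀ i, IsOpen (U' i) := fun i => hUopen _
  have hU'cov : (⋃ i, U' i) = Set.univ := by
    apply Set.eq_univ_of_univ_subset
    intro y hy
    obtain ⟨z, hzt, hz⟩ := Set.mem_iUnion₂.1 (ht hy)
    exact Set.mem_iUnion.2 ⟨e ⟨z, hzt⟩, by simpa [hU', Equiv.symm_apply_apply] using hz⟩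
  obtain ⟨N, V, col, ref, hVopen, hVcov, hVsub, hVdisj⟩ := hdim t.card U' hU'open hU'cov
  obtain ⟨φ, hφcont, hφ0, hφ1, hφV⟩ := exists_partition V hVopen hVcov
  set w : Fin N → X → ℝ := fun k x => Real.sqrt (φ k x) with hwdef
  set T : Fin N → Matrix (Fin l) (Fin l) A := fun k => C' (ref k) with hT
  have hwcont : ∀ k, Continuous (w k) := fun k => Real.continuous_sqrt.comp (hφcont k)
  refine ⟨⟨fun x => ∑ k, w k x • eMat m (col k) (T k), ?_⟩, ?_⟩
  · exact continuous_finset_sum _ fun k _ => ((hwcont k).smul continuous_const)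
  · intro x p q
    have horth : ∀ k k', k ≠ k' → col k = col k' → w k x * w k' x = 0 := by
      intro k k' hkk hcol
      by_cases h1 : φ k x = 0
      · simp [hwdef, h1]
      by_cases h2 : φ k' x = 0
      · simp [hwdef, h2]
      exfalso
      have hmem : x ∈ V k ∩ V k' := ⟨hφV k x h1, hφV k' x h2⟩
      rw [hVdisj k k' hkk hcol] at hmem
      exact hmem
    have conj := conj_sum (fun k => w k x) col T (b x) horth
    show ‖((∑ k, w k x • eMat m (col k) (T k)) * diagMat m (b x) *
        star (∑ k, w k x • eMat m (col k) (T k))) p q - cornerMat m (a x) p q‖ ≤ ε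
    rw [conj]
    have hsq : ∀ k, w k x * w k x = φ k x := fun k => Real.mul_self_sqrt (hφ0 k x)
    have hrw : (∑ k, (w k x * w k x) • cornerMat m (T k * b x * star (T k)))
        = ∑ k, φ k x • cornerMat m (T k * b x * star (T k)) :=
      Finset.sum_congr rfl fun k _ => by rw [hsq k]
    rw [hrw]
    refine corner_entry_bound (fun k => φ k x) (fun k => hφ0 k x) (hφ1 x) _ _ ?_ p q
    intro k hk i j
    have hxV : x ∈ V k := hφV k x hk
    have hxU : x ∈ U' (ref k) := hVsub k hxV
    exact (hUprop _ x hxU i j).le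

end Aux

/-- Let `m ≥ 0`, let `X` be a compact metric space of covering dimension at most `m`, let `A`
be a unital C*-algebra, let `l ≥ 1`, and let `a, b ∈ C(X, Mₗ(A))₊`.  If `a(x) ≾ b(x)` in
`Mₗ(A)` for every `x ∈ X`, then `a ≾ diag(b, …, b)` (`m + 1` copies of `b`) in
`C(X, M_{(m+1)l}(A))`. -/
theorem cuntzSub_of_pointwise (m : ℕ) (X : Type*) [MetricSpace X] [CompactSpace X]
    (hdim : CoveringDimLE X m) (A : Type*) [CStarAlgebra A] (l : ℕ) (hl : 1 ≤ l)
    (a b : C(X, Matrix (Fin l) (Fin l) A)) (ha : IsPositiveElem a) (hb : IsPositiveElem b)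
    (hpt : ∀ x : X, CuntzSub (a x) (b x)) :
    CuntzSub (cornerCM m a) (diagCM m b) := by
  have key : ∀ n : ℕ, ∃ cc : C(X, Matrix (Fin (m + 1) × Fin l) (Fin (m + 1) × Fin l) A),
      ∀ (x : X) (p q : Fin (m + 1) × Fin l),
        ‖(cc x * diagMat m (b x) * star (cc x)) p q - cornerMat m (a x) p q‖ ≤ 1/((n:ℝ)+1) :=
    fun n => key_approx hdim a b hpt (by positivity)
  choose c hc using key
  refine ⟨c, ?_⟩
  rw [ContinuousMap.tendsto_iff_tendstoUniformly]
  refine tendstoUniformly_pi' fun p => tendstoUniformly_pi' fun q => ?_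
  rw [Metric.tendstoUniformly_iff]
  intro δ hδ
  have hev : ∀ᶠ n : ℕ in atTop, 1/((n:ℝ)+1) < δ :=
    tendsto_one_div_add_atTop_nhds_zero_nat.eventually (gt_mem_nhds hδ)
  filter_upwards [hev] with n hn x
  have happ : (c n * diagCM m b * star (c n)) x = c n x * diagMat m (b x) * star (c n x) := rfl
  have hcorn : cornerCM m a x = cornerMat m (a x) := rfl
  rw [dist_comm]
  calc dist ((c n * diagCM m b * star (c n)) x p q) (cornerCM m a x p q)
      = ‖(c n x * diagMat m (b x) * star (c n x)) p q - cornerMat m (a x) p q‖ := by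
        rw [happ, hcorn, dist_eq_norm]
    _ ≤ 1/((n:ℝ)+1) := hc n x p q
    _ < δ := hn
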